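/- arXiv:1503.07935 — 5 statements merged into one kernel-verified Lean document; each statement's English description precedes it below -/
import Mathlib

section
/- The BNN dynamics satisfies positive correlation: for x ∈ Δ(S), with excess evaluation Φ̂_p(x) = max(Φ_p(x) − ⟨x, Φ(x)⟩, 0) and B_p(x) = Φ̂_p(x) − x_p Σ_q Φ̂_q(x), one has ⟨B(x), Φ(x)⟩ = Σ_p Φ̂_p(x)² ≥ 0, with equality if and only if B(x) = 0. -/
theorem stmt_11 {S : Type*} [Fintype S]
    (Φ : (S → ℝ) → S → ℝ) (x : S → ℝ)
    (hx : (∀ p, 0 ≤ x p) ∧ ∑ p, x p = 1)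
    (Φhat : S → ℝ)
    (hΦhat : ∀ p, Φhat p = max (Φ x p - ∑ q, x q * Φ x q) 0)
    (B : S → ℝ)
    (hB : ∀ p, B p = Φhat p - x p * ∑ q, Φhat q) :
    (∑ p, B p * Φ x p = ∑ p, Φhat p ^ 2) ∧
    0 ≤ ∑ p, Φhat p ^ 2 ∧
    (∑ p, B p * Φ x p = 0 ↔ B = 0) := by
  obtain ⟨hx0, hx1⟩ := hx
  set c := ∑ q, x q * Φ x q with hc
  set T := ∑ q, Φhat q with hT
  have key : ∀ p, Φhat p * (Φ x p - c) = Φhat p ^ 2 := by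
    intro p
    rcases le_or_gt 0 (Φ x p - c) with h | h
    · rw [hΦhat p, max_eq_left h]; ring
    · rw [hΦhat p, max_eq_right h.le]; ring
  have hBsum : ∑ p, B p * Φ x p = (∑ p, Φhat p * Φ x p) - T * c := by
    simp only [hB, sub_mul]
    rw [Finset.sum_sub_distrib]
    congr 1
    rw [Finset.mul_sum]
    apply Finset.sum_congr rfl
    intro p _
    ring
  have hΦsum : ∑ p, Φhat p ^ 2 = (∑ p, Φhat p * Φ x p) - T * c := by
    have : ∑ p, Φhat p ^ 2 = ∑ p, Φhat p * (Φ x p - c) := by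
      exact (Finset.sum_congr rfl fun p _ => (key p).symm)
    rw [this]
    simp only [mul_sub]
    rw [Finset.sum_sub_distrib]
    congr 1
    rw [hT, Finset.sum_mul]
  have heq : ∑ p, B p * Φ x p = ∑ p, Φhat p ^ 2 := by rw [hBsum, hΦsum]
  have hnn : 0 ≤ ∑ p, Φhat p ^ 2 :=
    Finset.sum_nonneg fun p _ => sq_nonneg _
  refine ⟨heq, hnn, ?_⟩
  constructor
  · intro h0
    rw [heq] at h0
    have hz : ∀ p ∈ Finset.univ, Φhat p ^ 2 = 0 :=
      (Finset.sum_eq_zero_iff_of_nonneg fun p _ => sq_nonneg _).mp h0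
    have hΦz : ∀ p, Φhat p = 0 := fun p => pow_eq_zero_iff (n := 2) (by norm_num) |>.mp (hz p (Finset.mem_univ p))
    funext p
    have hT0 : T = 0 := by rw [hT]; simp [hΦz]
    rw [hB p, hΦz, hT0]; simp
  · intro hB0
    rw [heq]
    have hΦeq : ∀ p, Φhat p = x p * T := by
      intro p
      have := congrFun hB0 p
      rw [hB p] at this
      simpa [sub_eq_zero] using this
    calc ∑ p, Φhat p ^ 2 = ∑ p, Φhat p * (Φ x p - c) :=
          Finset.sum_congr rfl fun p _ => (key p).symm
      _ = ∑ p, T * (x p * Φ x p) - ∑ p, T * (x p * c) := by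
          rw [← Finset.sum_sub_distrib]
          apply Finset.sum_congr rfl
          intro p _
          rw [hΦeq p]; ring
      _ = T * c - T * c := by
          rw [← Finset.mul_sum, ← Finset.mul_sum, ← hc, ← Finset.sum_mul]
          rw [hx1, one_mul]
      _ = 0 := sub_self _
end

section
/- The Smith dynamics satisfies positive correlation: for x ∈ Δ(S), with B_p(x) = Σ_q x_q [Φ_p(x) − Φ_q(x)]^+ − x_p Σ_q [Φ_q(x) − Φ_p(x)]^+, one has ⟨B(x), Φ(x)⟩ = Σ_{p,q} x_q ([Φ_p(x) − Φ_q(x)]^+)² ≥ 0, with equality if and only if B(x) = 0. -/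
theorem stmt_12 {S : Type*} [Fintype S]
    (Φ : (S → ℝ) → S → ℝ) (x : S → ℝ)
    (hx : (∀ p, 0 ≤ x p) ∧ ∑ p, x p = 1)
    (B : S → ℝ)
    (hB : ∀ p, B p = ∑ q, x q * max (Φ x p - Φ x q) 0
      - x p * ∑ q, max (Φ x q - Φ x p) 0) :
    (∑ p, B p * Φ x p = ∑ p, ∑ q, x q * (max (Φ x p - Φ x q) 0) ^ 2) ∧
    0 ≤ ∑ p, ∑ q, x q * (max (Φ x p - Φ x q) 0) ^ 2 ∧
    (∑ p, B p * Φ x p = 0 ↔ B = 0) := by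
  obtain ⟨hx0, -⟩ := hx
  have key : ∀ t : ℝ, max t 0 * t = (max t 0) ^ 2 := by
    intro t
    rcases le_or_gt t 0 with h | h
    · simp [max_eq_right h]
    · rw [max_eq_left h.le]; ring
  have hmain : ∑ p, B p * Φ x p
      = ∑ p, ∑ q, x q * (max (Φ x p - Φ x q) 0) ^ 2 := by
    calc ∑ p, B p * Φ x p
        = ∑ p, ∑ q, x q * max (Φ x p - Φ x q) 0 * Φ x p
          - ∑ p, ∑ q, x p * max (Φ x q - Φ x p) 0 * Φ x p := by
          simp only [hB, sub_mul, Finset.sum_sub_distrib, Finset.sum_mul,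
            Finset.mul_sum, mul_assoc]
      _ = ∑ p, ∑ q, x q * max (Φ x p - Φ x q) 0 * Φ x p
          - ∑ p, ∑ q, x q * max (Φ x p - Φ x q) 0 * Φ x q := by
          rw [Finset.sum_comm (s := Finset.univ) (t := Finset.univ)
            (f := fun p q => x p * max (Φ x q - Φ x p) 0 * Φ x p)]
      _ = ∑ p, ∑ q, x q * (max (Φ x p - Φ x q) 0 * (Φ x p - Φ x q)) := by
          rw [← Finset.sum_sub_distrib]
          refine Finset.sum_congr rfl fun p _ => ?_
          rw [← Finset.sum_sub_distrib]
          refine Finset.sum_congr rfl fun q _ => ?_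
          ring
      _ = ∑ p, ∑ q, x q * (max (Φ x p - Φ x q) 0) ^ 2 := by
          simp only [key]
  have hnn : ∀ p q : S, 0 ≤ x q * (max (Φ x p - Φ x q) 0) ^ 2 := fun p q =>
    mul_nonneg (hx0 q) (sq_nonneg _)
  refine ⟨hmain, Finset.sum_nonneg fun p _ => Finset.sum_nonneg fun q _ => hnn p q, ?_, ?_⟩
  · intro h0
    rw [hmain] at h0
    have hall : ∀ p q : S, x q * max (Φ x p - Φ x q) 0 = 0 := by
      intro p q
      have h1 := (Finset.sum_eq_zero_iff_of_nonneg
        (fun p _ => Finset.sum_nonneg fun q _ => hnn p q)).mp h0 p (Finset.mem_univ p)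
      have h2 := (Finset.sum_eq_zero_iff_of_nonneg
        (fun q _ => hnn p q)).mp h1 q (Finset.mem_univ q)
      rcases mul_eq_zero.mp h2 with h | h
      · rw [h, zero_mul]
      · rw [pow_eq_zero_iff (by norm_num)] at h
        rw [h, mul_zero]
    funext p
    rw [hB p, Finset.mul_sum]
    have e1 : ∑ q, x q * max (Φ x p - Φ x q) 0 = 0 :=
      Finset.sum_eq_zero fun q _ => hall p q
    have e2 : ∑ q, x p * max (Φ x q - Φ x p) 0 = 0 :=
      Finset.sum_eq_zero fun q _ => hall q p
    rw [e1, e2, sub_zero]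
    rfl
  · intro h
    simp [h]
end

section
/- The BNN dynamics satisfies Nash stationarity: for x ∈ Δ(S), B(x) = 0 (where B_p(x) = Φ̂_p(x) − x_p Σ_q Φ̂_q(x) and Φ̂_p(x) = [Φ_p(x) − ⟨x, Φ(x)⟩]^+) if and only if x is an equilibrium, i.e., x_p > 0 implies Φ_p(x) ≥ Φ_q(x) for all q ∈ S. -/
theorem stmt_16 {S : Type*} [Fintype S]
    (Φ : (S → ℝ) → S → ℝ) (x : S → ℝ)
    (hx : (∀ p, 0 ≤ x p) ∧ ∑ p, x p = 1)
    (Φhat : S → ℝ)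
    (hΦhat : ∀ p, Φhat p = max (Φ x p - ∑ q, x q * Φ x q) 0)
    (B : S → ℝ)
    (hB : ∀ p, B p = Φhat p - x p * ∑ q, Φhat q) :
    B = 0 ↔ ∀ p, 0 < x p → ∀ q, Φ x q ≤ Φ x p := by
  obtain ⟨hx0, hx1⟩ := hx
  set avg := ∑ q, x q * Φ x q with havg
  have hsum0 : ∑ p, x p * (Φ x p - avg) = 0 := by
    simp only [mul_sub, Finset.sum_sub_distrib, ← Finset.sum_mul, hx1]
    ring
  have hhat_nonneg : ∀ p, 0 ≤ Φhat p := fun p => by rw [hΦhat]; exact le_max_right _ _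
  have hp0 : ∃ p0, 0 < x p0 := by
    by_contra h
    push_neg at h
    have h2 : ∑ p, x p = 0 :=
      Finset.sum_eq_zero fun p _ => le_antisymm (h p) (hx0 p)
    rw [hx1] at h2; norm_num at h2
  constructor
  · intro hBz p hxp q
    set C := ∑ q, Φhat q with hCdef
    have hC : 0 ≤ C := Finset.sum_nonneg fun q _ => hhat_nonneg q
    have hhat_eq : ∀ r, Φhat r = x r * C := by
      intro r
      have h := congrFun hBz r
      rw [hB r] at h
      simp only [Pi.zero_apply] at h
      linarith
    have hC0 : C = 0 := by
      by_contra hCne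
      have hCpos : 0 < C := lt_of_le_of_ne hC (Ne.symm hCne)
      have key : ∀ r, x r * (Φ x r - avg) = x r ^ 2 * C := by
        intro r
        rcases eq_or_lt_of_le (hx0 r) with h | h
        · rw [← h]; ring
        · have hpos : 0 < Φhat r := by rw [hhat_eq r]; positivity
          have : Φ x r - avg = Φhat r := by
            rw [hΦhat r] at hpos ⊢
            rcases le_or_gt (Φ x r - avg) 0 with h2 | h2
            · rw [max_eq_right h2] at hpos; linarith
            · rw [max_eq_left h2.le]
          rw [this, hhat_eq r]; ring
      have hsum2 : ∑ r, x r ^ 2 * C = 0 := by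
        rw [← hsum0]; exact Finset.sum_congr rfl fun r _ => (key r).symm
      have hsumsq : ∑ r, x r ^ 2 = 0 := by
        rw [← Finset.sum_mul] at hsum2
        exact (mul_eq_zero.mp hsum2).resolve_right hCne
      obtain ⟨p0, hp0⟩ := hp0
      have : x p0 ^ 2 = 0 := by
        have := Finset.sum_eq_zero_iff_of_nonneg
          (fun r _ => by positivity : ∀ r ∈ Finset.univ, (0:ℝ) ≤ x r ^ 2) |>.mp hsumsq p0
          (Finset.mem_univ _)
        exact this
      nlinarith
    have hhat0 : ∀ r, Φhat r = 0 := fun r => by rw [hhat_eq r, hC0]; ring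
    have hle : ∀ r, Φ x r ≤ avg := by
      intro r
      have h := hhat0 r
      rw [hΦhat r] at h
      have := le_max_left (Φ x r - avg) 0
      linarith [this.trans_eq h]
    have hterm : x p * (Φ x p - avg) = 0 := by
      have := Finset.sum_eq_zero_iff_of_nonpos
        (fun r _ => mul_nonpos_of_nonneg_of_nonpos (hx0 r) (by linarith [hle r]) :
          ∀ r ∈ Finset.univ, x r * (Φ x r - avg) ≤ 0) |>.mp hsum0 p (Finset.mem_univ _)
      exact this
    have hpavg : Φ x p = avg := by
      have := mul_eq_zero.mp hterm
      rcases this with h | h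
      · exact absurd h (ne_of_gt hxp)
      · linarith
    rw [hpavg]; exact hle q
  · intro heq
    obtain ⟨p0, hxp0⟩ := hp0
    set M := Φ x p0 with hM
    have hle : ∀ q, Φ x q ≤ M := heq p0 hxp0
    have havgM : avg = M := by
      have : ∀ q, x q * Φ x q = x q * M := by
        intro q
        rcases eq_or_lt_of_le (hx0 q) with h | h
        · rw [← h]; ring
        · have : Φ x q = M := le_antisymm (hle q) (heq q h p0)
          rw [this]
      rw [havg, Finset.sum_congr rfl fun q _ => this q, ← Finset.sum_mul, hx1, one_mul]
    have hhat0 : ∀ r, Φhat r = 0 := by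
      intro r
      rw [hΦhat r, havgM, max_eq_right (by linarith [hle r])]
    funext r
    rw [hB r, hhat0 r, Finset.sum_eq_zero fun q _ => hhat0 q]
    simp
end

section
/- For the replicator dynamics on the interior of the simplex and a dissipative Φ with equilibrium x*, the relative entropy H(x) = Σ_{p ∈ supp(x*)} x*_p ln(x*_p / x_p) satisfies ⟨∇H(x), B(x)⟩ = ⟨x − x*, Φ(x)⟩ ≤ 0 for all x with supp(x*) ⊆ supp(x), where B_p(x) = x_p(Φ_p(x) − ⟨x, Φ(x)⟩). -/
/-!
The gradient of `H` at `x` has entries `-x*_p / x_p` on the support of `x*`, so against the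
replicator field the factor `x_p` cancels; since `∑ x*_p = 1`, the mean payoff `⟨x, Φ x⟩`
survives once and the pairing is `⟨x - x*, Φ x⟩`. This is the sum of the dissipativity
inequality at `(x, x*)` and the variational inequality of `x*` tested at `x`, hence `≤ 0`.
-/

open Finset

theorem hasDerivAt_mul_log_div (w : ℝ) {t : ℝ} (ht : t ≠ 0) :
    HasDerivAt (fun u : ℝ => w * Real.log (w / u)) (-(w / t)) t := by
  rcases eq_or_ne w 0 with rfl | hw
  · simpa using hasDerivAt_const t (0 : ℝ)
  have hquot : HasDerivAt (fun u : ℝ => w / u) (-(w / t ^ 2)) t := by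
    simpa [div_eq_mul_inv] using (hasDerivAt_inv ht).const_mul w
  refine ((hquot.log (div_ne_zero hw ht)).const_mul w).congr_deriv ?_
  field_simp

theorem fderiv_sum_mul_log_div_apply {S : Type*} [Fintype S] (s : Finset S) (w x v : S → ℝ)
    (hx : ∀ p ∈ s, x p ≠ 0) :
    fderiv ℝ (fun z : S → ℝ => ∑ p ∈ s, w p * Real.log (w p / z p)) x v =
      ∑ p ∈ s, -(w p / x p) * v p := by
  have hderiv : HasFDerivAt (fun z : S → ℝ => ∑ p ∈ s, w p * Real.log (w p / z p))
      (∑ p ∈ s, (-(w p / x p)) • ContinuousLinearMap.proj (R := ℝ) (φ := fun _ : S => ℝ) p) x :=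
    HasFDerivAt.fun_sum fun p hp =>
      (hasDerivAt_mul_log_div (w p) (hx p hp)).comp_hasFDerivAt (f := fun z : S → ℝ => z p) x
        (hasFDerivAt_apply p x)
  simp [hderiv.fderiv]

theorem sum_filter_replicator_eq {S : Type*} [Fintype S] (w x F : S → ℝ) (hw : ∑ p, w p = 1)
    (hsupp : ∀ p, w p ≠ 0 → x p ≠ 0) :
    ∑ p ∈ univ.filter (fun p => w p ≠ 0), -(w p / x p) * (x p * (F p - ∑ q, x q * F q)) =
      ∑ p, (x p - w p) * F p := by
  set A := ∑ q, x q * F q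
  have hterm : ∀ p, -(w p / x p) * (x p * (F p - A)) = w p * A - w p * F p := by
    intro p
    rcases eq_or_ne (w p) 0 with hwp | hwp
    · simp [hwp]
    · field_simp [hsupp p hwp]
      ring
  rw [sum_filter_of_ne (p := fun p => w p ≠ 0) fun p _ => mt fun hwp => by simp [hwp]]
  simp only [hterm, sum_sub_distrib, ← sum_mul, hw, one_mul, A, sub_mul]

theorem sum_sub_mul_nonpos_of_dissipative_of_variational {S : Type*} [Fintype S]
    {a b x y : S → ℝ}
    (hmono : ∑ p, (a p - b p) * (x p - y p) ≤ 0) (hvar : 0 ≤ ∑ p, b p * (y p - x p)) :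
    ∑ p, (x p - y p) * a p ≤ 0 := by
  have hsplit : ∑ p, (x p - y p) * a p =
      ∑ p, (a p - b p) * (x p - y p) - ∑ p, b p * (y p - x p) := by
    rw [← sum_sub_distrib]
    exact sum_congr rfl fun p _ => by ring
  linarith

theorem stmt_18 {S : Type*} [Fintype S]
    (Φ : (S → ℝ) → S → ℝ)
    (hdiss : ∀ x y : S → ℝ,
      ((∀ p, 0 ≤ x p) ∧ ∑ p, x p = 1) → ((∀ p, 0 ≤ y p) ∧ ∑ p, y p = 1) →
      ∑ p, (Φ x p - Φ y p) * (x p - y p) ≤ 0)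
    (xstar : S → ℝ) (hxstar : (∀ p, 0 ≤ xstar p) ∧ ∑ p, xstar p = 1)
    (heq : ∀ y : S → ℝ, ((∀ p, 0 ≤ y p) ∧ ∑ p, y p = 1) →
      0 ≤ ∑ p, Φ xstar p * (xstar p - y p))
    (H : (S → ℝ) → ℝ)
    (hH : ∀ z : S → ℝ,
      H z = ∑ p ∈ Finset.univ.filter (fun p => xstar p ≠ 0),
        xstar p * Real.log (xstar p / z p))
    (x : S → ℝ) (hx : (∀ p, 0 ≤ x p) ∧ ∑ p, x p = 1)
    (hsupp : ∀ p, xstar p ≠ 0 → x p ≠ 0)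
    (B : S → ℝ)
    (hB : ∀ p, B p = x p * (Φ x p - ∑ q, x q * Φ x q)) :
    fderiv ℝ H x B = ∑ p, (x p - xstar p) * Φ x p ∧
      ∑ p, (x p - xstar p) * Φ x p ≤ 0 := by
  refine ⟨?_, sum_sub_mul_nonpos_of_dissipative_of_variational
    (hdiss x xstar hx hxstar) (heq x hx)⟩
  rw [funext hH, fderiv_sum_mul_log_div_apply _ _ _ _ fun p hp => hsupp p (mem_filter.mp hp).2,
    funext hB]
  exact sum_filter_replicator_eq xstar x (Φ x) hxstar.2 hsupp
end

section
/- In a two-node network with parallel arcs and affine per-unit cost functions l_a(m) = b_a m + d_a (b_a > 0, d_a ≥ 0), for an atomic splittable player j of weight m^j with cost u^j(z) = Σ_a x^j_a (b_a f_a(z) + d_a), where f_a(z) = Σ_i m^i x^i_a is the aggregate flow, the function W(z) = −(1/2) Σ_a b_a [f_a(z)² + Σ_{j} (m^j x^j_a)²] − Σ_a d_a f_a(z) satisfies ∂W/∂x^j_a = −m^j ∂u^j/∂x^j_a for every arc a. -/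
/-!
Direct computation: the flow `f_a` is linear in the profile with `∂f_a/∂x^j_a = m^j`, so
`∂W/∂x^j_a = -(1/2) b_a (2 m^j f_a + 2 (m^j)² x^j_a) - m^j d_a`, while
`∂u^j/∂x^j_a = b_a f_a + d_a + b_a m^j x^j_a`.
-/

lemma ContinuousLinearMap.hasFDerivAt_sq {E : Type*} [NormedAddCommGroup E] [NormedSpace ℝ E]
    (L : E →L[ℝ] ℝ) (x : E) : HasFDerivAt (fun y => L y ^ 2) ((2 * L x) • L) x := by
  simpa using L.hasFDerivAt.pow (x := x) 2

namespace AtomicSplittable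

variable {I A : Type*}

def coord (i : I) (a : A) : (I → A → ℝ) →L[ℝ] ℝ :=
  (ContinuousLinearMap.proj a : (A → ℝ) →L[ℝ] ℝ).comp (ContinuousLinearMap.proj i)

@[simp]
lemma coord_apply (i : I) (a : A) (x : I → A → ℝ) : coord i a x = x i a := rfl

lemma coord_single [DecidableEq I] [DecidableEq A] (i j : I) (a a' : A) :
    coord i a' (Pi.single j (Pi.single a 1)) = if i = j then if a' = a then 1 else 0 else 0 := by
  by_cases hi : i = j <;> by_cases ha : a' = a <;> simp [hi, ha]

variable [Fintype I]

def arcFlow (m : I → ℝ) (a : A) : (I → A → ℝ) →L[ℝ] ℝ :=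
  ∑ i, m i • coord i a

@[simp]
lemma arcFlow_apply (m : I → ℝ) (a : A) (x : I → A → ℝ) :
    arcFlow m a x = ∑ i, m i * x i a := by
  simp [arcFlow]

lemma arcFlow_single [DecidableEq I] [DecidableEq A] (m : I → ℝ) (j : I) (a a' : A) :
    arcFlow m a' (Pi.single j (Pi.single a 1)) = if a' = a then m j else 0 := by
  simp [Pi.single_apply, apply_ite (fun g : A → ℝ => g a')]

variable [Fintype A]

def cost (m : I → ℝ) (b d : A → ℝ) (j : I) (x : I → A → ℝ) : ℝ :=
  ∑ a, x j a * (b a * arcFlow m a x + d a)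

noncomputable def potential (m : I → ℝ) (b d : A → ℝ) (x : I → A → ℝ) : ℝ :=
  -(1 / 2) * ∑ a, b a * (arcFlow m a x ^ 2 + ∑ i, (m i * x i a) ^ 2)
    - ∑ a, d a * arcFlow m a x

lemma hasFDerivAt_cost (m : I → ℝ) (b d : A → ℝ) (j : I) (x : I → A → ℝ) :
    HasFDerivAt (cost m b d j)
      (∑ a, (x j a • b a • arcFlow m a + (b a * arcFlow m a x + d a) • coord j a)) x :=
  HasFDerivAt.fun_sum fun a _ =>
    (coord j a).hasFDerivAt.mul (x := x)
      (((arcFlow m a).hasFDerivAt.const_mul (b a)).add_const (d a))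

lemma hasFDerivAt_potential (m : I → ℝ) (b d : A → ℝ) (x : I → A → ℝ) :
    HasFDerivAt (potential m b d)
      (-(1 / 2 : ℝ) • ∑ a, b a • ((2 * arcFlow m a x) • arcFlow m a
          + ∑ i, (2 * (m i * x i a)) • m i • coord i a)
        - ∑ a, d a • arcFlow m a) x := by
  refine (HasFDerivAt.const_mul (HasFDerivAt.fun_sum fun a _ => ?_) _).sub
    (HasFDerivAt.fun_sum fun a _ => (arcFlow m a).hasFDerivAt.const_mul (d a))
  exact ((arcFlow m a).hasFDerivAt_sq x).add
    (HasFDerivAt.fun_sum fun i _ => (m i • coord i a).hasFDerivAt_sq x) |>.const_mul (b a)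

lemma fderiv_cost_single [DecidableEq I] [DecidableEq A] (m : I → ℝ) (b d : A → ℝ) (j : I) (a : A)
    (x : I → A → ℝ) :
    fderiv ℝ (cost m b d j) x (Pi.single j (Pi.single a 1)) =
      b a * arcFlow m a x + d a + b a * m j * x j a := by
  rw [(hasFDerivAt_cost m b d j x).fderiv]
  simp only [_root_.sum_apply, _root_.add_apply, _root_.smul_apply, smul_eq_mul,
    arcFlow_single, coord_single]
  simp [Finset.sum_add_distrib, mul_ite, Finset.sum_ite_eq']
  ring

lemma fderiv_potential_single [DecidableEq I] [DecidableEq A] (m : I → ℝ) (b d : A → ℝ) (j : I)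
    (a : A) (x : I → A → ℝ) :
    fderiv ℝ (potential m b d) x (Pi.single j (Pi.single a 1)) =
      -m j * (b a * arcFlow m a x + d a + b a * m j * x j a) := by
  rw [(hasFDerivAt_potential m b d x).fderiv]
  simp only [_root_.sub_apply, _root_.sum_apply, _root_.add_apply, _root_.smul_apply, smul_eq_mul,
    arcFlow_single, coord_single]
  simp [Finset.sum_add_distrib, mul_add, mul_ite, Finset.sum_ite_eq']
  ring

end AtomicSplittable

open AtomicSplittable in
theorem stmt_19_general {I A : Type*} [Fintype I] [DecidableEq I] [Fintype A] [DecidableEq A]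
    (m : I → ℝ)
    (b dd : A → ℝ)
    (f : A → (I → A → ℝ) → ℝ)
    (hf : ∀ a x, f a x = ∑ i, m i * x i a)
    (u : I → (I → A → ℝ) → ℝ)
    (hu : ∀ j x, u j x = ∑ a, x j a * (b a * f a x + dd a))
    (W : (I → A → ℝ) → ℝ)
    (hW : ∀ x, W x = -(1 / 2) * (∑ a, b a * ((f a x) ^ 2 + ∑ j, (m j * x j a) ^ 2))
      - ∑ a, dd a * f a x) :
    ∀ (j : I) (a : A) (x : I → A → ℝ),
      fderiv ℝ W x (Pi.single j (Pi.single a (1 : ℝ))) =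
        - m j * fderiv ℝ (u j) x (Pi.single j (Pi.single a (1 : ℝ))) := by
  have hflow : f = fun a => ⇑(arcFlow m a) := funext₂ fun a x => by simp [hf]
  subst hflow
  have hcost : u = cost m b dd := funext₂ fun j x => hu j x
  have hpotential : W = potential m b dd := funext hW
  intro j a x
  rw [hcost, hpotential, fderiv_potential_single, fderiv_cost_single]

theorem stmt_19 {I A : Type*} [Fintype I] [DecidableEq I] [Fintype A] [DecidableEq A]
    (m : I → ℝ) (hm : ∀ i, 0 < m i)
    (b dd : A → ℝ) (hb : ∀ a, 0 < b a) (hd : ∀ a, 0 ≤ dd a)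
    (f : A → (I → A → ℝ) → ℝ)
    (hf : ∀ a x, f a x = ∑ i, m i * x i a)
    (u : I → (I → A → ℝ) → ℝ)
    (hu : ∀ j x, u j x = ∑ a, x j a * (b a * f a x + dd a))
    (W : (I → A → ℝ) → ℝ)
    (hW : ∀ x, W x = -(1 / 2) * (∑ a, b a * ((f a x) ^ 2 + ∑ j, (m j * x j a) ^ 2))
      - ∑ a, dd a * f a x) :
    ∀ (j : I) (a : A) (x : I → A → ℝ),
      fderiv ℝ W x (Pi.single j (Pi.single a (1 : ℝ))) =
        - m j * fderiv ℝ (u j) x (Pi.single j (Pi.single a (1 : ℝ))) :=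
  stmt_19_general m b dd f hf u hu W hW
end
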